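/- arXiv:2509.15074 — 6 statements merged into one kernel-verified Lean document; each statement's English description precedes it below -/
import Mathlib

section
/- For every guard φ over a finite variable set V there exists a DFA B over alphabet V with a finite state type such that for every word w : List V, B accepts w if and only if the Parikh image Ψ(w) satisfies φ. Consequently the language {w : List V | Ψ(w) ⊨ φ} is regular and closed under permutations of letters. -/
open scoped ENNReal
open Classical

/-- Weighted automata over a commutative alphabet `V` with weights in `ℝ≥0∞`. -/
structure WA (V : Type) where
  Q : Type
  [fin : Fintype Q]
  [dec : DecidableEq Q]
  w : Q → Q → ℝ≥0∞
  lab : Q → Q → Option V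
  I : Q → ℝ≥0∞
  F : Q → ℝ≥0∞

attribute [instance] WA.fin WA.dec

variable {V : Type} [Fintype V] [DecidableEq V]

/-- Weight of a path of length `n`. -/
noncomputable def WA.pathWeight (A : WA V) {n : ℕ} (p : Fin (n + 1) → A.Q) : ℝ≥0∞ :=
  A.I (p 0) * (∏ i : Fin n, A.w (p i.castSucc) (p i.succ)) * A.F (p (Fin.last n))

/-- Parikh image of a path: the number of `X`-labeled transitions, for each `X : V`. -/
def WA.parikh (A : WA V) {n : ℕ} (p : Fin (n + 1) → A.Q) : V → ℕ := fun X =>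
  (Finset.univ.filter fun i : Fin n => A.lab (p i.castSucc) (p i.succ) = some X).card

/-- Behavior of a weighted automaton, as a map from valuations to `ℝ≥0∞`. -/
noncomputable def WA.behavior (A : WA V) (σ : V → ℕ) : ℝ≥0∞ :=
  ∑' (n : ℕ) (p : {p : Fin (n + 1) → A.Q // A.parikh p = σ}), A.pathWeight p.1

/-- Total mass of a weighted automaton. -/
noncomputable def WA.mass (A : WA V) : ℝ≥0∞ :=
  ∑' σ : V → ℕ, A.behavior σ

/-- Number of transitions with nonzero weight. -/
noncomputable def WA.size (A : WA V) : ℕ :=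
  Nat.card {qr : A.Q × A.Q // A.w qr.1 qr.2 ≠ 0}

/-- Deterministic finite automata over alphabet `V` with a finite state type. -/
structure DFA' (V : Type) where
  S : Type
  [fin : Fintype S]
  [dec : DecidableEq S]
  step : S → V → S
  start : S
  accept : Finset S

attribute [instance] DFA'.fin DFA'.dec

def DFA'.Accepts (B : DFA' V) (w : List V) : Prop :=
  w.foldl B.step B.start ∈ B.accept

/-- The language of `B` is closed under permutations of letters. -/
def DFA'.PermClosed (B : DFA' V) : Prop :=
  ∀ w₁ w₂ : List V, w₁.Perm w₂ → (B.Accepts w₁ ↔ B.Accepts w₂)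

/-- Parikh image of a word. -/
def parikhWord (w : List V) : V → ℕ := fun X => w.count X

/-- Product of a weighted automaton with a DFA. -/
noncomputable def WA.prodDFA (A : WA V) (B : DFA' V) : WA V where
  Q := A.Q × B.S
  w := fun a b =>
    match A.lab a.1 b.1 with
    | some X => if b.2 = B.step a.2 X then A.w a.1 b.1 else 0
    | none => if b.2 = a.2 then A.w a.1 b.1 else 0
  lab := fun a b => A.lab a.1 b.1
  I := fun a => if a.2 = B.start then A.I a.1 else 0
  F := fun a => if a.2 ∈ B.accept then A.F a.1 else 0

/-- `A[X/1]`: relabel every `X`-transition to an `ε`-transition. -/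
def WA.subst1 (A : WA V) (X : V) : WA V :=
  { A with lab := fun q r => if A.lab q r = some X then none else A.lab q r }

/-- `A[X/0]`: set the weight of every `X`-labeled transition to `0`. -/
def WA.subst0 (A : WA V) (X : V) : WA V :=
  { A with w := fun q r => if A.lab q r = some X then 0 else A.w q r }

/-- Weighted disjoint union `A₁ ⊕_{p,q} A₂`. -/
noncomputable def WA.wsum (p q : ℝ≥0∞) (A₁ A₂ : WA V) : WA V where
  Q := A₁.Q ⊕ A₂.Q
  w := fun a b =>
    match a, b with
    | .inl q, .inl r => A₁.w q r
    | .inr q, .inr r => A₂.w q r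
    | _, _ => 0
  lab := fun a b =>
    match a, b with
    | .inl q, .inl r => A₁.lab q r
    | .inr q, .inr r => A₂.lab q r
    | _, _ => none
  I := Sum.elim (fun s => p * A₁.I s) (fun s => q * A₂.I s)
  F := Sum.elim A₁.F A₂.F

/-- Concatenation `A₁ • A₂`. -/
noncomputable def WA.concat (A₁ A₂ : WA V) : WA V where
  Q := A₁.Q ⊕ A₂.Q
  w := fun a b =>
    match a, b with
    | .inl q, .inl r => A₁.w q r
    | .inr s, .inr t => A₂.w s t
    | .inl q, .inr s => A₁.F q * A₂.I s
    | .inr _, .inl _ => 0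
  lab := fun a b =>
    match a, b with
    | .inl q, .inl r => A₁.lab q r
    | .inr s, .inr t => A₂.lab s t
    | _, _ => none
  I := Sum.elim A₁.I (fun _ => 0)
  F := Sum.elim (fun _ => 0) A₂.F

/-- Transition substitution `A₁[Y/A₂]`. -/
noncomputable def WA.tsubst (A₁ : WA V) (Y : V) (A₂ : WA V) : WA V where
  Q := A₁.Q ⊕ (A₁.Q × A₁.Q × A₂.Q)
  w := fun a b =>
    match a, b with
    | .inl q, .inl r => if A₁.lab q r = some Y then 0 else A₁.w q r
    | .inl q, .inr (q', r, s) =>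
        if q' = q ∧ A₁.lab q r = some Y then A₁.w q r * A₂.I s else 0
    | .inr (q, r, s), .inr (q', r', t) =>
        if q' = q ∧ r' = r then A₂.w s t else 0
    | .inr (q, r, s), .inl r' =>
        if r' = r ∧ A₁.lab q r = some Y then A₂.F s else 0
  lab := fun a b =>
    match a, b with
    | .inl q, .inl r => A₁.lab q r
    | .inr (_, _, s), .inr (_, _, t) => A₂.lab s t
    | _, _ => none
  I := Sum.elim A₁.I (fun _ => 0)
  F := Sum.elim A₁.F (fun _ => 0)

/-- The guard DFA `B_{X>0}`. -/
def BXpos (X : V) : DFA' V where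
  S := Bool
  step := fun s a => if a = X then true else s
  start := false
  accept := {true}

/-- The decrement automaton `A^{X--}`. -/
noncomputable def WA.decrA (A : WA V) (X : V) : WA V :=
  let P := A.prodDFA (BXpos X)
  WA.wsum 1 1
    { P with
      lab := fun a b =>
        if a.2 = false ∧ b.2 = true ∧ P.lab a b = some X then none else P.lab a b }
    (A.subst0 X)

/-- Convolution of two maps `(V → ℕ) → ℝ≥0∞`. -/
noncomputable def conv (f g : (V → ℕ) → ℝ≥0∞) : (V → ℕ) → ℝ≥0∞ := fun σ =>
  ∑' p : {p : (V → ℕ) × (V → ℕ) // p.1 + p.2 = σ}, f p.1.1 * g p.1.2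

/-- Indicator (Dirac) function of a valuation. -/
noncomputable def delta (τ : V → ℕ) : (V → ℕ) → ℝ≥0∞ := fun σ => if σ = τ then 1 else 0

/-- `k`-fold convolution power. -/
noncomputable def convPow (g : (V → ℕ) → ℝ≥0∞) : ℕ → ((V → ℕ) → ℝ≥0∞)
  | 0 => delta 0
  | k + 1 => conv (convPow g k) g

/-- Rectangular guards over `V`. -/
inductive Guard (V : Type) : Type where
  | lt : V → ℕ → Guard V
  | mod : V → (n m : ℕ) → n < m → Guard V
  | and : Guard V → Guard V → Guard V
  | not : Guard V → Guard V

/-- Satisfaction of a guard by a valuation. -/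
def Guard.sat : Guard V → (V → ℕ) → Prop
  | .lt X n, σ => σ X < n
  | .mod X n m _, σ => σ X % m = n
  | .and g₁ g₂, σ => g₁.sat σ ∧ g₂.sat σ
  | .not g, σ => ¬g.sat σ

/-- Number of atomic subformulas. -/
def Guard.atoms : Guard V → ℕ
  | .lt _ _ => 1
  | .mod _ _ _ _ => 1
  | .and g₁ g₂ => g₁.atoms + g₂.atoms
  | .not g => g.atoms

/-- All constants in the guard are at most `N`. -/
def Guard.constLe (N : ℕ) : Guard V → Prop
  | .lt _ n => n ≤ N
  | .mod _ n m _ => n ≤ N ∧ m ≤ N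
  | .and g₁ g₂ => g₁.constLe N ∧ g₂.constLe N
  | .not g => g.constLe N

/-- The counting DFA for `X < n`. -/
def ltDFA (X : V) (n : ℕ) : DFA' V where
  S := Fin (n + 1)
  step := fun s a => if a = X then (if h : s.1 < n then ⟨s.1 + 1, by omega⟩ else s) else s
  start := ⟨0, by omega⟩
  accept := Finset.univ.filter fun s => s.1 < n

/-- The counting DFA for `X ≡ n mod m`. -/
def modDFA (X : V) (n m : ℕ) (h : n < m) : DFA' V where
  S := Fin m
  step := fun s a => if a = X then ⟨(s.1 + 1) % m, Nat.mod_lt _ (by omega)⟩ else s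
  start := ⟨0, by omega⟩
  accept := {⟨n, h⟩}

/-- Product DFA. -/
def DFA'.inter (B C : DFA' V) : DFA' V where
  S := B.S × C.S
  step := fun s a => (B.step s.1 a, C.step s.2 a)
  start := (B.start, C.start)
  accept := B.accept ×ˢ C.accept

/-- Complement DFA. -/
def DFA'.compl (B : DFA' V) : DFA' V :=
  { B with accept := B.acceptᶜ }

/-- The guard DFA `B_φ`. -/
def Guard.dfa : Guard V → DFA' V
  | .lt X n => ltDFA X n
  | .mod X n m h => modDFA X n m h
  | .and g₁ g₂ => g₁.dfa.inter g₂.dfa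
  | .not g => g.dfa.compl

/-- Loop-free ReDiP programs; distributions are given by weighted automata. -/
inductive ReDiP (V : Type) : Type 1 where
  | setzero : V → ReDiP V
  | incrConst : V → ℕ → ReDiP V
  | incrDist : V → WA V → ReDiP V
  | incrVar : V → V → ReDiP V
  | iid : V → WA V → V → ReDiP V
  | decr : V → ReDiP V
  | choice : ℝ≥0∞ → ReDiP V → ReDiP V → ReDiP V
  | ite : Guard V → ReDiP V → ReDiP V → ReDiP V
  | observe : Guard V → ReDiP V
  | seq : ReDiP V → ReDiP V → ReDiP V

/-- A distribution automaton for variable `x`: mass exactly `1` and supported on `x`. -/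
def distWf (x : V) (D : WA V) : Prop :=
  D.mass = 1 ∧ ∀ σ : V → ℕ, D.behavior σ ≠ 0 → ∀ y : V, y ≠ x → σ y = 0

/-- Well-formedness of a ReDiP program. -/
def ReDiP.wf : ReDiP V → Prop
  | .incrDist x D => distWf x D
  | .iid x D _ => distWf x D
  | .choice p P₁ P₂ => p ≤ 1 ∧ P₁.wf ∧ P₂.wf
  | .ite _ P₁ P₂ => P₁.wf ∧ P₂.wf
  | .seq P₁ P₂ => P₁.wf ∧ P₂.wf
  | _ => True

/-- `P` contains no `iid` statements. -/
def ReDiP.noIid : ReDiP V → Prop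
  | .iid _ _ _ => False
  | .choice _ P₁ P₂ => P₁.noIid ∧ P₂.noIid
  | .ite _ P₁ P₂ => P₁.noIid ∧ P₂.noIid
  | .seq P₁ P₂ => P₁.noIid ∧ P₂.noIid
  | _ => True

/-- Program size. -/
def ReDiP.size : ReDiP V → ℕ
  | .choice _ P₁ P₂ => 1 + P₁.size + P₂.size
  | .ite _ P₁ P₂ => 1 + P₁.size + P₂.size
  | .seq P₁ P₂ => P₁.size + P₂.size
  | _ => 1

/-- The `(n+1)`-state chain of `X`-transitions (Dirac distribution `δ_n` on `X`). -/
noncomputable def chainX (X : V) (n : ℕ) : WA V where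
  Q := Fin (n + 1)
  w := fun i j => if j.1 = i.1 + 1 then 1 else 0
  lab := fun i j => if j.1 = i.1 + 1 then some X else none
  I := fun i => if i = ⟨0, by omega⟩ then 1 else 0
  F := fun i => if i = Fin.last n then 1 else 0

/-- The three-state chain with one `Y`-transition followed by one `X`-transition. -/
noncomputable def chainYX (Y X : V) : WA V where
  Q := Fin 3
  w := fun i j => if j.1 = i.1 + 1 then 1 else 0
  lab := fun i j => if j.1 = i.1 + 1 then (if i.1 = 0 then some Y else some X) else none
  I := fun i => if i = 0 then 1 else 0
  F := fun i => if i = Fin.last 2 then 1 else 0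

/-- The two-state automaton with a single `Y`-transition. -/
noncomputable def singleY (Y : V) : WA V := chainX Y 1

/-- The automata translation of a ReDiP program (Table 2). -/
noncomputable def ReDiP.sem : ReDiP V → WA V → WA V
  | .setzero x, A => A.subst1 x
  | .incrConst x n, A => A.concat (chainX x n)
  | .incrDist _ D, A => A.concat D
  | .incrVar x y, A => A.tsubst y (chainYX y x)
  | .iid _ D y, A => A.tsubst y ((singleY y).concat D)
  | .decr x, A => A.decrA x
  | .choice p P₁ P₂, A => WA.wsum p (1 - p) (P₁.sem A) (P₂.sem A)
  | .ite φ P₁ P₂, A =>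
      WA.wsum 1 1 (P₁.sem (A.prodDFA φ.dfa)) (P₂.sem (A.prodDFA (Guard.not φ).dfa))
  | .observe φ, A => A.prodDFA φ.dfa
  | .seq P₁ P₂, A => P₂.sem (P₁.sem A)

/-- The parameters (distribution automata sizes, constants, guard atoms) of `P` are
bounded by `d`, `N` and `η`, respectively. -/
def ReDiP.boundedBy (d N η : ℕ) : ReDiP V → Prop
  | .setzero _ => True
  | .incrConst _ n => n ≤ N
  | .incrDist _ D => D.size ≤ d
  | .incrVar _ _ => True
  | .iid _ D _ => D.size ≤ d
  | .decr _ => True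
  | .choice _ P₁ P₂ => P₁.boundedBy d N η ∧ P₂.boundedBy d N η
  | .ite φ P₁ P₂ =>
      φ.atoms ≤ η ∧ φ.constLe N ∧ P₁.boundedBy d N η ∧ P₂.boundedBy d N η
  | .observe φ => φ.atoms ≤ η ∧ φ.constLe N
  | .seq P₁ P₂ => P₁.boundedBy d N η ∧ P₂.boundedBy d N η

/-- Configurations of the operational Markov chain. -/
inductive Conf (V : Type) : Type 1 where
  | run : ReDiP V → (V → ℕ) → Conf V
  | term : (V → ℕ) → Conf V
  | err : Conf V

/-- One-step transition probabilities of the operational Markov chain from `⟨P, σ⟩`. -/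
noncomputable def pstep : ReDiP V → (V → ℕ) → Conf V → ℝ≥0∞
  | .setzero x, σ, c => if c = Conf.term (Function.update σ x 0) then 1 else 0
  | .incrConst x n, σ, c => if c = Conf.term (Function.update σ x (σ x + n)) then 1 else 0
  | .incrDist x D, σ, c =>
      ∑' n : ℕ,
        if c = Conf.term (Function.update σ x (σ x + n)) then
          D.behavior (fun y => if y = x then n else 0)
        else 0
  | .incrVar x y, σ, c => if c = Conf.term (Function.update σ x (σ x + σ y)) then 1 else 0
  | .iid _ _ _, _, _ => 0
  | .decr x, σ, c => if c = Conf.term (Function.update σ x (σ x - 1)) then 1 else 0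
  | .choice p P₁ P₂, σ, c =>
      (if c = Conf.run P₁ σ then p else 0) + (if c = Conf.run P₂ σ then 1 - p else 0)
  | .ite φ P₁ P₂, σ, c =>
      if φ.sat σ then (if c = Conf.run P₁ σ then 1 else 0)
      else (if c = Conf.run P₂ σ then 1 else 0)
  | .observe φ, σ, c =>
      if φ.sat σ then (if c = Conf.term σ then 1 else 0)
      else (if c = Conf.err then 1 else 0)
  | .seq P₁ P₂, σ, c =>
      match c with
      | .run Q σ' =>
          (if Q = P₂ then pstep P₁ σ (Conf.term σ') else 0) +
          (match Q with
           | .seq P₁' P₂' => if P₂' = P₂ then pstep P₁ σ (Conf.run P₁' σ') else 0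
           | _ => 0)
      | .term _ => 0
      | .err => pstep P₁ σ Conf.err

/-- Transition probabilities between configurations (terminal and error states are absorbing
with no outgoing transitions). -/
noncomputable def cstep : Conf V → Conf V → ℝ≥0∞
  | .run P σ, c => pstep P σ c
  | _, _ => 0

/-- Initial distribution of the operational Markov chain `M(A, P)`. -/
noncomputable def mcInit (A : WA V) (P : ReDiP V) : Conf V → ℝ≥0∞
  | .run P' σ => if P' = P then A.behavior σ else 0
  | _ => 0

/-- Reachability probability `Pr^{M(A,P)}(◇ t)`: the sum over all finite sequences of
configurations ending at `t` and avoiding `t` before, of the initial weight of the first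
configuration times the product of the transition probabilities. -/
noncomputable def reachProb (A : WA V) (P : ReDiP V) (t : Conf V) : ℝ≥0∞ :=
  ∑' (k : ℕ)
      (p : {p : Fin (k + 1) → Conf V //
            p (Fin.last k) = t ∧ ∀ i : Fin k, p i.castSucc ≠ t}),
    mcInit A P (p.1 0) * ∏ i : Fin k, cstep (p.1 i.castSucc) (p.1 i.succ)

/-!
Each atomic guard is decided by a counter that reads only the letter `X`: for `X < n` a counter
saturating at `n`, for `X ≡ n mod m` a counter modulo `m`. After reading `w` it sits in the
`count X w`-th iterate of its start state, so acceptance depends on `w` only through `Ψ(w)`.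
Conjunction and negation are the product and complement automata.
-/

namespace DFA'

variable {V : Type}

theorem foldl_inter_step (B C : DFA' V) (w : List V) (s : B.S × C.S) :
    w.foldl (B.inter C).step s = (w.foldl B.step s.1, w.foldl C.step s.2) := by
  induction w generalizing s with
  | nil => rfl
  | cons a w ih => exact ih _

theorem accepts_inter_iff (B C : DFA' V) (w : List V) :
    (B.inter C).Accepts w ↔ B.Accepts w ∧ C.Accepts w := by
  show w.foldl (B.inter C).step (B.start, C.start) ∈ B.accept ×ˢ C.accept ↔ _
  rw [foldl_inter_step]
  exact Finset.mem_product

theorem accepts_compl_iff (B : DFA' V) (w : List V) : B.compl.Accepts w ↔ ¬B.Accepts w :=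
  Finset.mem_compl

def toDFA (B : DFA' V) : DFA V B.S := ⟨B.step, B.start, B.accept⟩

theorem toDFA_accepts (B : DFA' V) : B.toDFA.accepts = {w | B.Accepts w} := rfl

theorem isRegular_setOf_accepts (B : DFA' V) :
    Language.IsRegular ({w | B.Accepts w} : Language V) :=
  ⟨B.S, inferInstance, B.toDFA, B.toDFA_accepts⟩

end DFA'

section Counting

variable {V : Type} [DecidableEq V]

theorem List.foldl_ite_eq_iterate {S : Type} (X : V) (f : S → S) (w : List V) (s : S) :
    w.foldl (fun s a => if a = X then f s else s) s = f^[w.count X] s := by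
  induction w generalizing s with
  | nil => rfl
  | cons a w ih =>
    by_cases ha : a = X
    · subst ha
      simp [ih, Function.iterate_succ_apply]
    · simp [ih, ha]

theorem ltDFA_accepts_iff (X : V) (n : ℕ) (w : List V) :
    (ltDFA X n).Accepts w ↔ w.count X < n := by
  let f : Fin (n + 1) → Fin (n + 1) := fun s => if h : s.1 < n then ⟨s.1 + 1, by omega⟩ else s
  have hval (k : ℕ) (s : Fin (n + 1)) : (f^[k] s).1 = min (s.1 + k) n := by
    induction k generalizing s with
    | zero => simp [s.is_le]
    | succ k ih =>
      rw [Function.iterate_succ_apply']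
      have hk := ih s
      generalize f^[k] s = t at hk ⊢
      by_cases ht : t.1 < n
      · simp only [f, dif_pos ht]; omega
      · simp only [f, dif_neg ht]; omega
  have hfold : w.foldl (ltDFA X n).step (ltDFA X n).start = f^[w.count X] 0 :=
    List.foldl_ite_eq_iterate X f w 0
  rw [DFA'.Accepts, hfold]
  show f^[w.count X] 0 ∈ Finset.univ.filter (fun s : Fin (n + 1) => s.1 < n) ↔ _
  rw [Finset.mem_filter, hval]
  simp

theorem modDFA_accepts_iff (X : V) {n m : ℕ} (h : n < m) (w : List V) :
    (modDFA X n m h).Accepts w ↔ w.count X % m = n := by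
  let f : Fin m → Fin m := fun s => ⟨(s.1 + 1) % m, Nat.mod_lt _ (by omega)⟩
  have hval (k : ℕ) (s : Fin m) : (f^[k] s).1 = (s.1 + k) % m := by
    induction k generalizing s with
    | zero => simp [Nat.mod_eq_of_lt s.2]
    | succ k ih =>
      rw [Function.iterate_succ_apply']
      show ((f^[k] s).1 + 1) % m = _
      rw [ih, Nat.mod_add_mod, Nat.add_assoc]
  have hfold :
      w.foldl (modDFA X n m h).step (modDFA X n m h).start = f^[w.count X] ⟨0, by omega⟩ :=
    List.foldl_ite_eq_iterate X f w _
  rw [DFA'.Accepts, hfold]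
  show f^[w.count X] ⟨0, by omega⟩ ∈ ({⟨n, h⟩} : Finset (Fin m)) ↔ _
  rw [Finset.mem_singleton, Fin.ext_iff, hval, Nat.zero_add]

theorem Guard.dfa_accepts_iff (φ : Guard V) (w : List V) :
    φ.dfa.Accepts w ↔ φ.sat (parikhWord w) := by
  induction φ with
  | lt X n => exact ltDFA_accepts_iff X n w
  | mod X n m h => exact modDFA_accepts_iff X h w
  | and φ ψ ihφ ihψ => exact (DFA'.accepts_inter_iff _ _ w).trans (and_congr ihφ ihψ)
  | not φ ih => exact (DFA'.accepts_compl_iff _ w).trans (not_congr ih)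

theorem parikhWord_eq_of_perm {w₁ w₂ : List V} (h : w₁.Perm w₂) :
    parikhWord w₁ = parikhWord w₂ :=
  funext h.count_eq

end Counting

theorem stmt_1_general (V : Type) [DecidableEq V] (φ : Guard V) :
    (∃ B : DFA' V, ∀ w : List V, B.Accepts w ↔ φ.sat (parikhWord w)) ∧
      Language.IsRegular ({w : List V | φ.sat (parikhWord w)} : Language V) ∧
      (∀ w₁ w₂ : List V, w₁.Perm w₂ →
        (w₁ ∈ {w : List V | φ.sat (parikhWord w)} ↔
          w₂ ∈ {w : List V | φ.sat (parikhWord w)})) := by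
  have hlang : {w : List V | φ.sat (parikhWord w)} = {w | φ.dfa.Accepts w} :=
    Set.ext fun w => (φ.dfa_accepts_iff w).symm
  refine ⟨⟨φ.dfa, φ.dfa_accepts_iff⟩, hlang ▸ φ.dfa.isRegular_setOf_accepts, ?_⟩
  intro w₁ w₂ h
  show φ.sat _ ↔ φ.sat _
  rw [parikhWord_eq_of_perm h]

/-- every guard is modeled by a DFA; consequently the corresponding language
is regular and closed under permutations. -/
theorem stmt_1 (V : Type) [Fintype V] [DecidableEq V] (φ : Guard V) :
    (∃ B : DFA' V, ∀ w : List V, B.Accepts w ↔ φ.sat (parikhWord w)) ∧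
      Language.IsRegular ({w : List V | φ.sat (parikhWord w)} : Language V) ∧
      (∀ w₁ w₂ : List V, w₁.Perm w₂ →
        (w₁ ∈ {w : List V | φ.sat (parikhWord w)} ↔
          w₂ ∈ {w : List V | φ.sat (parikhWord w)})) :=
  stmt_1_general V φ
end

section
/- Let A be a weighted automaton over V and B a DFA over alphabet V whose accepted language is closed under permutations. Then for every valuation σ : V → ℕ: if there exists a word w : List V with Parikh image σ that is accepted by B, then ⟦A × B⟧ σ = ⟦A⟧ σ; otherwise ⟦A × B⟧ σ = 0. -/
open scoped ENNReal
open Classical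

variable {V : Type} [Fintype V] [DecidableEq V]

/-! A path of `A × B` has nonzero weight only if its second component is the run of `B` on the
word read along its first component `p`; it then carries the weight of `p` if `B` accepts that word,
and `0` otherwise. The words of two paths with Parikh image `σ` are permutations of each other, so
for a permutation-closed `B` acceptance depends on `σ` alone. -/

def DFA'.stepOpt {V : Type} (B : DFA' V) (s : B.S) : Option V → B.S
  | some a => B.step s a
  | none => s

lemma parikhWord_eq_iff_perm {V : Type} [DecidableEq V] {w₁ w₂ : List V} :
    parikhWord w₁ = parikhWord w₂ ↔ w₁.Perm w₂ := by
  rw [List.perm_iff_count, funext_iff]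
  rfl

lemma DFA'.PermClosed.accepts_iff_exists {V : Type} [DecidableEq V] {B : DFA' V}
    (hB : B.PermClosed) {w : List V} :
    B.Accepts w ↔ ∃ w' : List V, parikhWord w' = parikhWord w ∧ B.Accepts w' :=
  ⟨fun h => ⟨w, rfl, h⟩, fun ⟨_, hw', h⟩ => (hB _ _ (parikhWord_eq_iff_perm.1 hw')).1 h⟩

namespace WA

variable {V : Type} (A : WA V) (B : DFA' V) {n : ℕ}

-- Reducible, so that `simp` identifies it with the unfolded labels produced by `prodDFA_w`.
abbrev labelAt (p : Fin (n + 1) → A.Q) (i : Fin n) : Option V := A.lab (p i.castSucc) (p i.succ)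

def word (p : Fin (n + 1) → A.Q) : List V := (List.finRange n).filterMap (A.labelAt p)

lemma parikhWord_word [DecidableEq V] (p : Fin (n + 1) → A.Q) :
    parikhWord (A.word p) = A.parikh p := by
  funext X
  rw [parikhWord, word, List.count_filterMap, List.countP_eq_length_filter, WA.parikh,
    Finset.card_def, Finset.filter_val, Fin.univ_def]
  simp only [Multiset.filter_coe, Multiset.coe_card]
  exact congrArg List.length (List.filter_congr fun _ _ => beq_eq_decide _ _)

def run (p : Fin (n + 1) → A.Q) (i : Fin (n + 1)) : B.S :=
  ((List.finRange n).take i).foldl (fun s j => B.stepOpt s (A.labelAt p j)) B.start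

lemma run_succ (p : Fin (n + 1) → A.Q) (i : Fin n) :
    A.run B p i.succ = B.stepOpt (A.run B p i.castSucc) (A.labelAt p i) := by
  simp [run, List.take_add_one, List.foldl_append]

lemma run_last_mem_accept_iff_accepts (p : Fin (n + 1) → A.Q) :
    A.run B p (Fin.last n) ∈ B.accept ↔ B.Accepts (A.word p) := by
  rw [run, Fin.val_last, List.take_of_length_le (List.length_finRange ▸ le_rfl), DFA'.Accepts,
    word, List.foldl_filterMap]
  rfl

lemma eq_run_iff (p : Fin (n + 1) → A.Q) (s : Fin (n + 1) → B.S) :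
    s = A.run B p ↔
      s 0 = B.start ∧ ∀ i : Fin n, s i.succ = B.stepOpt (s i.castSucc) (A.labelAt p i) := by
  constructor
  · rintro rfl
    exact ⟨rfl, A.run_succ B p⟩
  · rintro ⟨h0, hs⟩
    funext i
    induction i using Fin.induction with
    | zero => exact h0
    | succ i ih => rw [hs, ih, run_succ]

lemma prodDFA_w (q r : A.Q) (s t : B.S) :
    (A.prodDFA B).w (q, s) (r, t) = if t = B.stepOpt s (A.lab q r) then A.w q r else 0 := by
  change (match A.lab q r with
    | some X => if t = B.step s X then A.w q r else 0
    | none => if t = s then A.w q r else 0) = _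
  cases A.lab q r <;> rfl

lemma pathWeight_prodDFA (p : Fin (n + 1) → A.Q) (s : Fin (n + 1) → B.S) :
    (A.prodDFA B).pathWeight (fun i => (p i, s i)) =
      if s = A.run B p ∧ B.Accepts (A.word p) then A.pathWeight p else 0 := by
  change (if s 0 = B.start then A.I (p 0) else 0) *
    (∏ i : Fin n, (A.prodDFA B).w (p i.castSucc, s i.castSucc) (p i.succ, s i.succ)) *
    (if s (Fin.last n) ∈ B.accept then A.F (p (Fin.last n)) else 0) = _
  rw [Finset.prod_congr rfl fun i _ => A.prodDFA_w B _ _ _ _, Finset.prod_ite_zero,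
    ite_zero_mul_ite_zero, ite_zero_mul_ite_zero]
  simp only [Finset.mem_univ, true_imp_iff, ← eq_run_iff]
  by_cases hs : s = A.run B p
  · subst hs
    simp only [true_and, run_last_mem_accept_iff_accepts]
    rfl
  · simp [hs]

lemma behavior_eq_tsum_sum [DecidableEq V] (σ : V → ℕ) :
    A.behavior σ =
      ∑' n : ℕ, ∑ p : Fin (n + 1) → A.Q, if A.parikh p = σ then A.pathWeight p else 0 :=
  tsum_congr fun _ => (tsum_subtype {p | A.parikh p = σ} A.pathWeight).trans (tsum_fintype _)

lemma sum_pathWeight_prodDFA [DecidableEq V] (σ : V → ℕ) :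
    ∑ P : Fin (n + 1) → (A.prodDFA B).Q,
        (if (A.prodDFA B).parikh P = σ then (A.prodDFA B).pathWeight P else 0) =
      ∑ p : Fin (n + 1) → A.Q,
        if A.parikh p = σ ∧ B.Accepts (A.word p) then A.pathWeight p else 0 := by
  refine (Fintype.sum_equiv (Equiv.arrowProdEquivProdArrow _ _ _) _
    (fun ps => if A.parikh ps.1 = σ then (A.prodDFA B).pathWeight (fun i => (ps.1 i, ps.2 i))
      else 0) (fun _ => rfl)).trans ?_
  rw [Fintype.sum_prod_type]
  refine Finset.sum_congr rfl fun p _ => ?_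
  by_cases hp : A.parikh p = σ <;> simp [hp, pathWeight_prodDFA, ite_and]

lemma behavior_prodDFA [DecidableEq V] (σ : V → ℕ) :
    (A.prodDFA B).behavior σ = ∑' n : ℕ, ∑ p : Fin (n + 1) → A.Q,
      if A.parikh p = σ ∧ B.Accepts (A.word p) then A.pathWeight p else 0 := by
  rw [behavior_eq_tsum_sum]
  exact tsum_congr fun n => A.sum_pathWeight_prodDFA B σ

end WA

theorem stmt_2_general (V : Type) [DecidableEq V] (A : WA V) (B : DFA' V)
    (hB : B.PermClosed) (σ : V → ℕ) :
    (A.prodDFA B).behavior σ =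
      if ∃ w : List V, parikhWord w = σ ∧ B.Accepts w then A.behavior σ else 0 := by
  rw [A.behavior_prodDFA, A.behavior_eq_tsum_sum]
  split_ifs with hσ
  · refine tsum_congr fun n => Finset.sum_congr rfl fun p _ => if_congr ?_ rfl rfl
    refine and_iff_left_of_imp fun hp => ?_
    rwa [hB.accepts_iff_exists, A.parikhWord_word, hp]
  · refine ENNReal.tsum_eq_zero.2 fun n => Finset.sum_eq_zero fun p _ => if_neg ?_
    rintro ⟨hp, hacc⟩
    exact hσ ⟨_, (A.parikhWord_word p).trans hp, hacc⟩

/-- product with a permutation-closed DFA filters the behavior. -/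
theorem stmt_2 (V : Type) [Fintype V] [DecidableEq V] (A : WA V) (B : DFA' V)
    (hB : B.PermClosed) (σ : V → ℕ) :
    (A.prodDFA B).behavior σ =
      if ∃ w : List V, parikhWord w = σ ∧ B.Accepts w then A.behavior σ else 0 :=
  stmt_2_general V A B hB σ
end

section
/- Let A₁ and A₂ be weighted automata over V and p, q : ℝ≥0∞. Then for every valuation σ : V → ℕ, ⟦A₁ ⊕_{p,q} A₂⟧ σ = p * ⟦A₁⟧ σ + q * ⟦A₂⟧ σ. -/
open scoped ENNReal
open Classical

variable {V : Type} [Fintype V] [DecidableEq V]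

/-! A transition between the two summands of `A₁ ⊕_{p,q} A₂` has weight zero, so a path of
nonzero weight never leaves the summand it starts in. There it is the image of a path of `A₁`
(or `A₂`) with the same Parikh image and with weight multiplied by `p` (or `q`). -/

theorem Sum.mem_range_elim_comp_of_isLeft_eq {ι α β : Type*} (r : ι → α ⊕ β) (i₀ : ι)
    (h : ∀ i, (r i).isLeft = (r i₀).isLeft) :
    r ∈ Set.range (Sum.elim (fun s : ι → α => Sum.inl ∘ s) (fun s : ι → β => Sum.inr ∘ s)) := by
  cases hr : (r i₀).isLeft
  · refine ⟨.inr fun i => (r i).getRight (Sum.isLeft_eq_false.mp (by rw [h i, hr])),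
      funext fun i => ?_⟩
    simp
  · refine ⟨.inl fun i => (r i).getLeft (by rw [h i, hr]), funext fun i => ?_⟩
    simp

theorem Sum.elim_comp_inl_comp_inr_injective {ι α β : Type*} [Nonempty ι] :
    Function.Injective
      (Sum.elim (fun s : ι → α => Sum.inl ∘ s) (fun s : ι → β => Sum.inr ∘ s)) :=
  Sum.inl_injective.comp_left.sumElim Sum.inr_injective.comp_left
    fun _ _ h => Sum.inl_ne_inr (congrFun h (Classical.arbitrary ι))

namespace WA

variable {V : Type}

theorem behavior_eq_tsum_indicator [DecidableEq V] (A : WA V) (σ : V → ℕ) :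
    A.behavior σ =
      ∑' (n : ℕ) (r : Fin (n + 1) → A.Q), {r | A.parikh r = σ}.indicator A.pathWeight r :=
  tsum_congr fun _ => tsum_subtype _ _

theorem pathWeight_eq_zero_of_w_eq_zero (A : WA V) {n : ℕ} (r : Fin (n + 1) → A.Q)
    (i : Fin n) (h : A.w (r i.castSucc) (r i.succ) = 0) : A.pathWeight r = 0 := by
  rw [pathWeight, Finset.prod_eq_zero (Finset.mem_univ i) h, mul_zero, zero_mul]

section wsum

variable (p q : ℝ≥0∞) (A₁ A₂ : WA V)

theorem wsum_w_eq_zero_of_isLeft_ne {a b : A₁.Q ⊕ A₂.Q} (h : a.isLeft ≠ b.isLeft) :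
    (wsum p q A₁ A₂).w a b = 0 := by
  cases a <;> cases b <;> simp_all [wsum]

theorem wsum_path_mem_range {n : ℕ} (r : Fin (n + 1) → A₁.Q ⊕ A₂.Q)
    (h : (wsum p q A₁ A₂).pathWeight r ≠ 0) :
    r ∈ Set.range (Sum.elim (fun s : Fin (n + 1) → A₁.Q => Sum.inl ∘ s)
      (fun s : Fin (n + 1) → A₂.Q => Sum.inr ∘ s)) := by
  refine Sum.mem_range_elim_comp_of_isLeft_eq r 0 fun i => ?_
  induction i using Fin.induction with
  | zero => rfl
  | succ j ih =>
    rw [← ih]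
    by_contra hne
    exact h (pathWeight_eq_zero_of_w_eq_zero _ r j
      (wsum_w_eq_zero_of_isLeft_ne p q A₁ A₂ (Ne.symm hne)))

theorem wsum_indicator_inl [DecidableEq V] (σ : V → ℕ) {n : ℕ} (s : Fin (n + 1) → A₁.Q) :
    {r | (wsum p q A₁ A₂).parikh r = σ}.indicator (wsum p q A₁ A₂).pathWeight (Sum.inl ∘ s) =
      p * {s | A₁.parikh s = σ}.indicator A₁.pathWeight s := by
  have hw : (wsum p q A₁ A₂).pathWeight (Sum.inl ∘ s) = p * A₁.pathWeight s := by
    simp only [pathWeight, wsum, Function.comp_apply, Sum.elim_inl]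
    ring
  have hσ : (wsum p q A₁ A₂).parikh (Sum.inl ∘ s) = A₁.parikh s := rfl
  simp only [Set.indicator_apply, Set.mem_ofPred_eq, hσ, hw, mul_ite, mul_zero]

theorem wsum_indicator_inr [DecidableEq V] (σ : V → ℕ) {n : ℕ} (s : Fin (n + 1) → A₂.Q) :
    {r | (wsum p q A₁ A₂).parikh r = σ}.indicator (wsum p q A₁ A₂).pathWeight (Sum.inr ∘ s) =
      q * {s | A₂.parikh s = σ}.indicator A₂.pathWeight s := by
  have hw : (wsum p q A₁ A₂).pathWeight (Sum.inr ∘ s) = q * A₂.pathWeight s := by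
    simp only [pathWeight, wsum, Function.comp_apply, Sum.elim_inr]
    ring
  have hσ : (wsum p q A₁ A₂).parikh (Sum.inr ∘ s) = A₂.parikh s := rfl
  simp only [Set.indicator_apply, Set.mem_ofPred_eq, hσ, hw, mul_ite, mul_zero]

end wsum

end WA

theorem stmt_4_general (V : Type) [DecidableEq V] (A₁ A₂ : WA V) (p q : ℝ≥0∞)
    (σ : V → ℕ) :
    (WA.wsum p q A₁ A₂).behavior σ = p * A₁.behavior σ + q * A₂.behavior σ := by
  simp only [WA.behavior_eq_tsum_indicator, ← ENNReal.tsum_mul_left, ← ENNReal.tsum_add]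
  refine tsum_congr fun n => (Sum.elim_comp_inl_comp_inr_injective.tsum_eq fun r hr =>
      WA.wsum_path_mem_range p q A₁ A₂ r (Set.indicator_apply_ne_zero.mp hr).2).symm.trans ?_
  rw [ENNReal.summable.tsum_sum ENNReal.summable]
  exact congrArg₂ (· + ·) (tsum_congr <| WA.wsum_indicator_inl p q A₁ A₂ σ)
    (tsum_congr <| WA.wsum_indicator_inr p q A₁ A₂ σ)

/-- behavior of the weighted disjoint union. -/
theorem stmt_4 (V : Type) [Fintype V] [DecidableEq V] (A₁ A₂ : WA V) (p q : ℝ≥0∞)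
    (σ : V → ℕ) :
    (WA.wsum p q A₁ A₂).behavior σ = p * A₁.behavior σ + q * A₂.behavior σ :=
  stmt_4_general V A₁ A₂ p q σ
end

section
/- Let A₁ and A₂ be weighted automata over V. Then the behavior of their concatenation is the convolution of their behaviors: for every valuation σ : V → ℕ, ⟦A₁ • A₂⟧ σ = ∑' over pairs (σ₁, σ₂) of valuations with σ₁ + σ₂ = σ of ⟦A₁⟧ σ₁ * ⟦A₂⟧ σ₂. -/
open scoped ENNReal
open Classical

variable {V : Type} [Fintype V] [DecidableEq V]

/-! A path of nonzero weight in `A₁ • A₂` starts in `Q₁` (only there is `I` nonzero), ends in `Q₂`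
(only there is `F` nonzero) and never moves from `Q₂` back to `Q₁`. So it is a path of `A₁`, the
bridging ε-transition of weight `F₁ q * I₂ s`, and a path of `A₂`; this gluing is injective,
multiplies weights and adds Parikh images. Summing over pairs of paths and grouping them by their
Parikh images gives the convolution. -/

namespace Fin

variable {α β : Type*}

@[to_additive]
theorem prod_edges_append {M : Type*} [CommMonoid M] (f : α → α → M) {m n : ℕ}
    (u : Fin (m + 1) → α) (v : Fin (n + 1) → α) :
    ∏ i : Fin (m + 1 + n), f (append u v i.castSucc) (append u v i.succ) =
      (∏ i : Fin m, f (u i.castSucc) (u i.succ)) * f (u (last m)) (v 0) *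
        ∏ i : Fin n, f (v i.castSucc) (v i.succ) := by
  have hl (i : Fin (m + 1)) : append u v (castAdd n i).castSucc = u i := append_left u v i
  have hls (i : Fin m) : append u v (castAdd n i.castSucc).succ = u i.succ :=
    append_left u v i.succ
  have hm : append u v (castAdd n (last m)).succ = v 0 := append_right u v 0
  have hrc (i : Fin n) : append u v (natAdd (m + 1) i).castSucc = v i.castSucc :=
    append_right u v i.castSucc
  have hrs (i : Fin n) : append u v (natAdd (m + 1) i).succ = v i.succ :=
    append_right u v i.succ
  rw [prod_univ_add, prod_univ_castSucc]
  simp only [hl, hls, hm, hrc, hrs]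

theorem append_apply_zero {m n : ℕ} (u : Fin (m + 1) → α) (v : Fin n → α) :
    append u v 0 = u 0 :=
  append_left u v 0

theorem append_apply_last {m n : ℕ} (u : Fin m → α) (v : Fin (n + 1) → α) :
    append u v (last (m + n)) = v (last n) :=
  append_right u v (last n)

theorem sigma_eq_of_ofFn_eq {m m' : ℕ} {u : Fin (m + 1) → α} {u' : Fin (m' + 1) → α}
    (h : List.ofFn u = List.ofFn u') : (⟨m, u⟩ : Σ k, Fin (k + 1) → α) = ⟨m', u'⟩ := by
  obtain rfl : m = m' := by simpa using congrArg List.length h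
  rw [List.ofFn_injective h]

theorem sigma_eq_of_append_inl_inr_eq {m n m' n' : ℕ} {u : Fin (m + 1) → α}
    {v : Fin (n + 1) → β} {u' : Fin (m' + 1) → α} {v' : Fin (n' + 1) → β}
    (h : (⟨m + 1 + n, append (m := m + 1) (Sum.inl ∘ u) (Sum.inr ∘ v)⟩ :
        Σ k, Fin (k + 1) → α ⊕ β) =
      ⟨m' + 1 + n', append (m := m' + 1) (Sum.inl ∘ u') (Sum.inr ∘ v')⟩) :
    (⟨m, u⟩ : Σ k, Fin (k + 1) → α) = ⟨m', u'⟩ ∧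
      (⟨n, v⟩ : Σ k, Fin (k + 1) → β) = ⟨n', v'⟩ := by
  have hl := congrArg (fun x : Σ k, Fin (k + 1) → α ⊕ β => List.ofFn x.2) h
  simp only [List.ofFn_fin_append, ← List.map_ofFn] at hl
  constructor
  · apply sigma_eq_of_ofFn_eq
    simpa only [List.filterMap_append, List.filterMap_map, Function.comp_def, Sum.getLeft?_inl,
      Sum.getLeft?_inr, List.filterMap_some, List.filterMap_none, List.append_nil]
      using congrArg (List.filterMap Sum.getLeft?) hl
  · apply sigma_eq_of_ofFn_eq
    simpa only [List.filterMap_append, List.filterMap_map, Function.comp_def, Sum.getRight?_inl,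
      Sum.getRight?_inr, List.filterMap_some, List.filterMap_none, List.nil_append]
      using congrArg (List.filterMap Sum.getRight?) hl

theorem exists_isLeft_iff_le {n : ℕ} (p : Fin (n + 1) → α ⊕ β) (h0 : (p 0).isLeft)
    (hlast : (p (last n)).isRight)
    (hstep : ∀ i : Fin n, (p i.castSucc).isRight → (p i.succ).isRight) :
    ∃ m k, n = m + 1 + k ∧ ∀ i : Fin (n + 1), (p i).isLeft ↔ i.val ≤ m := by
  have hmono : Monotone fun i => (p i).isRight :=
    monotone_iff_le_succ.2 fun i => Bool.le_iff_imp.2 (hstep i)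
  have hex : ∃ i, (p i).isRight := ⟨_, hlast⟩
  set j := Fin.find _ hex
  have hj : ∀ i, (p i).isRight ↔ j ≤ i := fun i =>
    ⟨Fin.find_le_of_pos hex, fun h => Bool.le_iff_imp.1 (hmono h) (Fin.find_spec hex)⟩
  have hj0 : j.val ≠ 0 := fun h =>
    Sum.not_isLeft.2 ((hj 0).2 (Fin.le_iff_val_le_val.2 (by simp [h]))) h0
  refine ⟨j.val - 1, n - j.val, by omega, fun i => ?_⟩
  rw [← Sum.not_isRight, hj, Fin.le_iff_val_le_val]
  omega

theorem exists_sigma_eq_append_inl_inr {n : ℕ} (p : Fin (n + 1) → α ⊕ β) (h0 : (p 0).isLeft)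
    (hlast : (p (last n)).isRight)
    (hstep : ∀ i : Fin n, (p i.castSucc).isRight → (p i.succ).isRight) :
    ∃ (m k : ℕ) (u : Fin (m + 1) → α) (v : Fin (k + 1) → β),
      (⟨n, p⟩ : Σ n, Fin (n + 1) → α ⊕ β) =
        ⟨m + 1 + k, append (m := m + 1) (Sum.inl ∘ u) (Sum.inr ∘ v)⟩ := by
  obtain ⟨m, k, rfl, hp⟩ := exists_isLeft_iff_le p h0 hlast hstep
  have hu (i : Fin (m + 1)) : (p (castAdd (k + 1) i)).isLeft :=
    (hp _).2 (Nat.lt_succ_iff.1 i.2)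
  have hv (i : Fin (k + 1)) : (p (natAdd (m + 1) i)).isRight :=
    Sum.not_isLeft.1 fun h => by have := (hp _).1 h; simp at this; omega
  refine ⟨m, k, fun i => (p _).getLeft (hu i), fun i => (p _).getRight (hv i), ?_⟩
  congr 1
  funext i
  refine addCases (m := m + 1) (n := k + 1) (fun i => ?_) (fun i => ?_) i
  · simp [append_left]
  · simp [append_right]

end Fin

namespace ENNReal

variable {α β M : Type*} [Add M]

theorem tsum_antidiagonal_ite_eq (a : M × M) (c : ℝ≥0∞) (σ : M) :
    ∑' τ : {τ : M × M // τ.1 + τ.2 = σ}, (if a = τ.1 then c else 0) =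
      if a.1 + a.2 = σ then c else 0 := by
  split_ifs with h
  · rw [tsum_eq_single ⟨a, h⟩ fun τ hτ => if_neg fun e => hτ (Subtype.ext e.symm), if_pos rfl]
  · exact ENNReal.tsum_eq_zero.2 fun τ => if_neg fun e : a = τ.1 => h (e ▸ τ.2)

theorem tsum_antidiagonal_mul_fiberSum (φ : α → M) (ψ : β → M) (f : α → ℝ≥0∞)
    (g : β → ℝ≥0∞) (σ : M) :
    ∑' τ : {τ : M × M // τ.1 + τ.2 = σ},
        (∑' a, if φ a = τ.1.1 then f a else 0) * (∑' b, if ψ b = τ.1.2 then g b else 0) =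
      ∑' x : α × β, if φ x.1 + ψ x.2 = σ then f x.1 * g x.2 else 0 := by
  calc _ = ∑' τ : {τ : M × M // τ.1 + τ.2 = σ}, ∑' x : α × β,
          if (φ x.1, ψ x.2) = τ.1 then f x.1 * g x.2 else 0 := by
        refine tsum_congr fun τ => ?_
        rw [← ENNReal.tsum_mul_right, ENNReal.tsum_prod']
        refine tsum_congr fun a => ?_
        rw [← ENNReal.tsum_mul_left]
        refine tsum_congr fun b => ?_
        simp only [ite_zero_mul_ite_zero, Prod.ext_iff]
    _ = _ := by
        rw [ENNReal.tsum_comm]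
        exact tsum_congr fun x => tsum_antidiagonal_ite_eq _ _ σ

end ENNReal

namespace WA

section

variable {V : Type}

abbrev Path (A : WA V) : Type := Σ n : ℕ, Fin (n + 1) → A.Q

theorem behavior_eq_tsum [DecidableEq V] (A : WA V) (σ : V → ℕ) :
    A.behavior σ = ∑' x : A.Path, if A.parikh x.2 = σ then A.pathWeight x.2 else 0 := by
  rw [behavior, ENNReal.tsum_sigma']
  refine tsum_congr fun n => ?_
  exact (tsum_subtype {p | A.parikh p = σ} A.pathWeight).trans (tsum_congr fun p => by
    simp [Set.indicator_apply])

theorem pathWeight_ne_zero_iff (A : WA V) {n : ℕ} (p : Fin (n + 1) → A.Q) :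
    A.pathWeight p ≠ 0 ↔
      A.I (p 0) ≠ 0 ∧ (∀ i : Fin n, A.w (p i.castSucc) (p i.succ) ≠ 0) ∧
        A.F (p (Fin.last n)) ≠ 0 := by
  simp only [pathWeight, ne_eq, mul_eq_zero, not_or, Finset.prod_eq_zero_iff, Finset.mem_univ,
    true_and, not_exists]
  tauto

/- The state type is fixed to `(A₁.concat A₂).Q` rather than `A₁.Q ⊕ A₂.Q` so that the lemmas on
`Fin.append` rewrite inside `(A₁.concat A₂).pathWeight` and `(A₁.concat A₂).parikh`. -/
def concatPath {A₁ A₂ : WA V} {m n : ℕ} (u : Fin (m + 1) → A₁.Q) (v : Fin (n + 1) → A₂.Q) :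
    Fin (m + 1 + n + 1) → (A₁.concat A₂).Q :=
  Fin.append (m := m + 1) (α := (A₁.concat A₂).Q) (Sum.inl ∘ u) (Sum.inr ∘ v)

theorem pathWeight_concatPath {A₁ A₂ : WA V} {m n : ℕ} (u : Fin (m + 1) → A₁.Q)
    (v : Fin (n + 1) → A₂.Q) :
    (A₁.concat A₂).pathWeight (concatPath u v) = A₁.pathWeight u * A₂.pathWeight v := by
  rw [pathWeight, concatPath, Fin.prod_edges_append, Fin.append_apply_zero,
    Fin.append_apply_last]
  simp only [concat, pathWeight, Function.comp_apply, Sum.elim_inl, Sum.elim_inr]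
  ring

theorem parikh_concatPath [DecidableEq V] {A₁ A₂ : WA V} {m n : ℕ} (u : Fin (m + 1) → A₁.Q)
    (v : Fin (n + 1) → A₂.Q) :
    (A₁.concat A₂).parikh (concatPath u v) = A₁.parikh u + A₂.parikh v := by
  ext X
  rw [parikh, concatPath, Finset.card_filter,
    Fin.sum_edges_append fun q r => if (A₁.concat A₂).lab q r = some X then 1 else 0]
  simp only [concat, parikh, Function.comp_apply, Finset.card_filter, Pi.add_apply,
    reduceCtorEq, if_false, add_zero]
  rfl

def concatPaths (A₁ A₂ : WA V) (x : A₁.Path × A₂.Path) : (A₁.concat A₂).Path :=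
  ⟨x.1.1 + 1 + x.2.1, concatPath x.1.2 x.2.2⟩

theorem concatPaths_injective (A₁ A₂ : WA V) : Function.Injective (concatPaths A₁ A₂) := by
  rintro ⟨⟨m, u⟩, ⟨n, v⟩⟩ ⟨⟨m', u'⟩, ⟨n', v'⟩⟩ h
  obtain ⟨h₁, h₂⟩ := Fin.sigma_eq_of_append_inl_inr_eq (α := A₁.Q) (β := A₂.Q) h
  exact Prod.ext h₁ h₂

theorem mem_range_concatPaths {A₁ A₂ : WA V} {n : ℕ} (p : Fin (n + 1) → (A₁.concat A₂).Q)
    (hp : (A₁.concat A₂).pathWeight p ≠ 0) : ⟨n, p⟩ ∈ Set.range (concatPaths A₁ A₂) := by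
  obtain ⟨hI, hw, hF⟩ := (pathWeight_ne_zero_iff _ p).1 hp
  have h0 : (p 0).isLeft := by
    revert hI; cases p 0 <;> simp [concat]
  have hlast : (p (Fin.last n)).isRight := by
    revert hF; cases p (Fin.last n) <;> simp [concat]
  have hstep (i : Fin n) : (p i.castSucc).isRight → (p i.succ).isRight := by
    have := hw i
    revert this
    cases p i.castSucc <;> cases p i.succ <;> simp [concat]
  obtain ⟨m, k, u, v, h⟩ :=
    Fin.exists_sigma_eq_append_inl_inr (α := A₁.Q) (β := A₂.Q) p h0 hlast hstep
  exact ⟨(⟨m, u⟩, ⟨k, v⟩), h.symm⟩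

end

end WA

theorem stmt_5_general (V : Type) [DecidableEq V] (A₁ A₂ : WA V) (σ : V → ℕ) :
    (A₁.concat A₂).behavior σ =
      ∑' p : {p : (V → ℕ) × (V → ℕ) // p.1 + p.2 = σ},
        A₁.behavior p.1.1 * A₂.behavior p.1.2 := by
  have hsupp : Function.support (fun x : (A₁.concat A₂).Path =>
      if (A₁.concat A₂).parikh x.2 = σ then (A₁.concat A₂).pathWeight x.2 else 0) ⊆
        Set.range (WA.concatPaths A₁ A₂) :=
    fun x hx => WA.mem_range_concatPaths x.2 fun h => hx (by simp [h])
  calc (A₁.concat A₂).behavior σ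
      = ∑' x : A₁.Path × A₂.Path, if (A₁.concat A₂).parikh (WA.concatPaths A₁ A₂ x).2 = σ then
          (A₁.concat A₂).pathWeight (WA.concatPaths A₁ A₂ x).2 else 0 := by
        rw [WA.behavior_eq_tsum, (WA.concatPaths_injective A₁ A₂).tsum_eq hsupp]
    _ = ∑' x : A₁.Path × A₂.Path, if A₁.parikh x.1.2 + A₂.parikh x.2.2 = σ then
          A₁.pathWeight x.1.2 * A₂.pathWeight x.2.2 else 0 := by
        simp only [WA.concatPaths, WA.pathWeight_concatPath, WA.parikh_concatPath]
    _ = _ := by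
        simp only [WA.behavior_eq_tsum]
        exact (ENNReal.tsum_antidiagonal_mul_fiberSum (fun x : A₁.Path => A₁.parikh x.2)
          (fun x : A₂.Path => A₂.parikh x.2) (fun x => A₁.pathWeight x.2)
          (fun x => A₂.pathWeight x.2) σ).symm

/-- the behavior of the concatenation is the convolution of the behaviors. -/
theorem stmt_5 (V : Type) [Fintype V] [DecidableEq V] (A₁ A₂ : WA V) (σ : V → ℕ) :
    (A₁.concat A₂).behavior σ =
      ∑' p : {p : (V → ℕ) × (V → ℕ) // p.1 + p.2 = σ},
        A₁.behavior p.1.1 * A₂.behavior p.1.2 :=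
  stmt_5_general V A₁ A₂ σ
end

section
/- Let f, g : (V → ℕ) → ℝ≥0∞ with ∑' σ, f σ ≤ 1 and ∑' σ, g σ ≤ 1, and let Y ∈ V. Then the substitution of Y in f by g again has total mass at most 1: ∑' σ, (∑' τ, f τ * (δ_{τ[Y↦0]} * g^{*(τ Y)}) σ) ≤ 1. -/
open scoped ENNReal
open Classical

variable {V : Type} [Fintype V] [DecidableEq V]

lemma conv_mass (a b : (V → ℕ) → ℝ≥0∞) :
    ∑' σ : V → ℕ, conv a b σ = (∑' σ : V → ℕ, a σ) * (∑' σ : V → ℕ, b σ) := by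
  have h1 : ∑' σ : V → ℕ, conv a b σ
      = ∑' x : (Σ σ : V → ℕ, {p : (V → ℕ) × (V → ℕ) // p.1 + p.2 = σ}),
          a x.2.1.1 * b x.2.1.2 := (ENNReal.tsum_sigma _).symm
  have h2 : ∑' x : (Σ σ : V → ℕ, {p : (V → ℕ) × (V → ℕ) // p.1 + p.2 = σ}),
          a x.2.1.1 * b x.2.1.2
      = ∑' p : (V → ℕ) × (V → ℕ), a p.1 * b p.2 := by
    exact (Equiv.sigmaFiberEquiv
      (fun p : (V → ℕ) × (V → ℕ) => p.1 + p.2)).tsum_eq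
      (fun p : (V → ℕ) × (V → ℕ) => a p.1 * b p.2)
  have h3 : ∑' p : (V → ℕ) × (V → ℕ), a p.1 * b p.2
      = (∑' σ : V → ℕ, a σ) * (∑' σ : V → ℕ, b σ) := by
    rw [ENNReal.tsum_prod (f := fun σ σ' => a σ * b σ')]
    simp [ENNReal.tsum_mul_left, ENNReal.tsum_mul_right]
  rw [h1, h2, h3]

lemma delta_mass (τ : V → ℕ) : ∑' σ : V → ℕ, delta τ σ = 1 := by
  simp [delta, tsum_ite_eq]

lemma convPow_mass_le (g : (V → ℕ) → ℝ≥0∞) (hg : ∑' σ : V → ℕ, g σ ≤ 1) (k : ℕ) :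
    ∑' σ : V → ℕ, convPow g k σ ≤ 1 := by
  induction k with
  | zero => simp [convPow, delta_mass]
  | succ k ih =>
      rw [convPow, conv_mass]
      exact mul_le_one' ih hg

/-- substitution of a variable preserves total mass at most one. -/
theorem stmt_10 (V : Type) [Fintype V] [DecidableEq V] (f g : (V → ℕ) → ℝ≥0∞)
    (hf : ∑' σ : V → ℕ, f σ ≤ 1) (hg : ∑' σ : V → ℕ, g σ ≤ 1) (Y : V) :
    ∑' σ : V → ℕ,
        (∑' τ : V → ℕ,
          f τ * conv (delta (Function.update τ Y 0)) (convPow g (τ Y)) σ) ≤ 1 := by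
  rw [ENNReal.tsum_comm]
  calc ∑' τ : V → ℕ, ∑' σ : V → ℕ,
        f τ * conv (delta (Function.update τ Y 0)) (convPow g (τ Y)) σ
      = ∑' τ : V → ℕ, f τ *
          ∑' σ : V → ℕ, conv (delta (Function.update τ Y 0)) (convPow g (τ Y)) σ := by
        simp [ENNReal.tsum_mul_left]
    _ ≤ ∑' τ : V → ℕ, f τ * 1 := by
        refine ENNReal.tsum_le_tsum fun τ => mul_le_mul_right ?_ _
        rw [conv_mass, delta_mass, one_mul]
        exact convPow_mass_le g hg _
    _ ≤ 1 := by simpa using hf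
end

section
/- Let A be a weighted automaton over V and B a DFA over alphabet V whose accepted language is closed under permutations. Then the mass of the product is at most the mass of A: ∑' σ, ⟦A × B⟧ σ ≤ ∑' σ, ⟦A⟧ σ. In particular, if A is a PGA then so is A × B. -/
open scoped ENNReal
open Classical

variable {V : Type} [Fintype V] [DecidableEq V]

/-
A DFA is deterministic, so once a path of `A` is fixed, the `B`-component of any product path
of nonzero weight lying over it is forced: it starts in `B.start` and follows the labels of the
path. Hence each path of `A` carries at most one product path of nonzero weight, and that one
weighs no more than the path itself, as the product only replaces some of its factors by `0`.
Summing over all paths, the mass of `A × B` is at most the mass of `A`.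
-/

section ProdDFA

variable {α : Type} (A : WA α) (B : DFA' α)

def DFA'.stepLabel (t : B.S) : Option α → B.S
  | some X => B.step t X
  | none => t

def WA.dfaRun {n : ℕ} (q : Fin (n + 1) → A.Q) : Fin (n + 1) → B.S :=
  Fin.induction B.start fun i t => B.stepLabel t (A.lab (q i.castSucc) (q i.succ))

theorem WA.eq_dfaRun {n : ℕ} {q : Fin (n + 1) → A.Q} {s : Fin (n + 1) → B.S}
    (h_start : s 0 = B.start)
    (h_step : ∀ i : Fin n,
      s i.succ = B.stepLabel (s i.castSucc) (A.lab (q i.castSucc) (q i.succ))) :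
    s = A.dfaRun B q := by
  funext i
  induction i using Fin.induction with
  | zero => exact h_start
  | succ i ih => rw [h_step i, ih]; rfl

theorem WA.mass_eq_tsum_pathWeight [DecidableEq α] :
    A.mass = ∑' (n : ℕ) (p : Fin (n + 1) → A.Q), A.pathWeight p := by
  simp only [WA.mass, WA.behavior]
  rw [ENNReal.tsum_comm]
  refine tsum_congr fun n => ?_
  rw [← (Equiv.sigmaFiberEquiv (A.parikh (n := n))).tsum_eq A.pathWeight, ENNReal.tsum_sigma']
  rfl

theorem WA.prodDFA_w_s11 (a b : A.Q × B.S) :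
    (A.prodDFA B).w a b = if b.2 = B.stepLabel a.2 (A.lab a.1 b.1) then A.w a.1 b.1 else 0 := by
  simp only [WA.prodDFA]
  split <;> simp_all [DFA'.stepLabel]

theorem WA.pathWeight_prodDFA_le {n : ℕ} (q : Fin (n + 1) → A.Q) (s : Fin (n + 1) → B.S) :
    (A.prodDFA B).pathWeight (fun i => (q i, s i)) ≤ A.pathWeight q := by
  refine mul_le_mul' (mul_le_mul' ?_ (Finset.prod_le_prod' fun i _ => ?_)) ?_
  · simp only [WA.prodDFA]; split_ifs <;> simp
  · rw [WA.prodDFA_w_s11]; split_ifs <;> simp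
  · simp only [WA.prodDFA]; split_ifs <;> simp

theorem WA.pathWeight_prodDFA_eq_zero {n : ℕ} (q : Fin (n + 1) → A.Q) (s : Fin (n + 1) → B.S)
    (hs : s ≠ A.dfaRun B q) :
    (A.prodDFA B).pathWeight (fun i => (q i, s i)) = 0 := by
  contrapose! hs
  simp only [WA.pathWeight, ne_eq, mul_eq_zero, Finset.prod_eq_zero_iff, not_or] at hs
  obtain ⟨⟨h_start, h_step⟩, -⟩ := hs
  refine A.eq_dfaRun B (by_contra fun h => h_start ?_) fun i => by_contra fun h => ?_
  · simp [WA.prodDFA, h]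
  · exact h_step ⟨i, Finset.mem_univ i, by simp [WA.prodDFA_w_s11, h]⟩

theorem WA.tsum_pathWeight_prodDFA_fiber_le {n : ℕ} (q : Fin (n + 1) → A.Q) :
    ∑' s : Fin (n + 1) → B.S, (A.prodDFA B).pathWeight (fun i => (q i, s i)) ≤
      A.pathWeight q := by
  rw [tsum_eq_single (A.dfaRun B q) fun s hs => A.pathWeight_prodDFA_eq_zero B q s hs]
  exact A.pathWeight_prodDFA_le B q _

theorem WA.tsum_pathWeight_prodDFA_le (n : ℕ) :
    ∑' p : Fin (n + 1) → (A.prodDFA B).Q, (A.prodDFA B).pathWeight p ≤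
      ∑' q : Fin (n + 1) → A.Q, A.pathWeight q := by
  calc ∑' p : Fin (n + 1) → A.Q × B.S, (A.prodDFA B).pathWeight p
      = ∑' (q : Fin (n + 1) → A.Q) (s : Fin (n + 1) → B.S),
          (A.prodDFA B).pathWeight (fun i => (q i, s i)) := by
        rw [← ENNReal.tsum_prod]
        exact ((Equiv.arrowProdEquivProdArrow _ (fun _ => A.Q) (fun _ => B.S)).symm.tsum_eq _).symm
    _ ≤ ∑' q : Fin (n + 1) → A.Q, A.pathWeight q :=
        ENNReal.tsum_le_tsum (A.tsum_pathWeight_prodDFA_fiber_le B)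

theorem WA.mass_prodDFA_le [DecidableEq α] : (A.prodDFA B).mass ≤ A.mass := by
  rw [WA.mass_eq_tsum_pathWeight, WA.mass_eq_tsum_pathWeight]
  exact ENNReal.tsum_le_tsum (A.tsum_pathWeight_prodDFA_le B)

end ProdDFA

theorem stmt_11_general (V : Type) [DecidableEq V] (A : WA V) (B : DFA' V) :
    (A.prodDFA B).mass ≤ A.mass ∧ (A.mass ≤ 1 → (A.prodDFA B).mass ≤ 1) :=
  ⟨A.mass_prodDFA_le B, (A.mass_prodDFA_le B).trans⟩

/-- the product with a permutation-closed DFA does not increase the mass;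
in particular it preserves the PGA property. -/
theorem stmt_11 (V : Type) [Fintype V] [DecidableEq V] (A : WA V) (B : DFA' V)
    (hB : B.PermClosed) :
    (A.prodDFA B).mass ≤ A.mass ∧ (A.mass ≤ 1 → (A.prodDFA B).mass ≤ 1) :=
  stmt_11_general V A B
end
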